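/- Let ∂ be a generator. For all x, y ∈ X and μ ∈ N, the following three statements are equivalent: (i) ∂(μ + δ_x + δ_y) = ∂(μ + δ_x) = ∂(μ + δ_y); (ii) ∂(μ + δ_x + δ_y) = ∂(μ + δ_x) = ∂μ; (iii) ∂(μ + δ_x) = ∂(μ + δ_y) = ∂μ. -/

import Mathlib

/-- The Dirac counting measure at a point, in the model of counting measures
on `X` as functions `X → ℕ` (pointwise order and addition). -/
noncomputable def delta {X : Type*} (x : X) : X → ℕ := Set.indicator {x} 1

/-- A generator: a map on counting measures satisfying (H1) thinning, (H2) additivity,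
(H3) idempotency and (H4) consistency. -/
def IsGenerator {X : Type*} (D : (X → ℕ) → (X → ℕ)) : Prop :=
  (∀ μ, D μ ≤ μ) ∧
  (∀ μ x, D μ x ≠ 0 → D (μ + delta x) = D μ + delta x) ∧
  (∀ μ μ' : X → ℕ, μ' ≤ μ - D μ → D (D μ + μ') = D μ) ∧
  (∀ μ μ' ψ : X → ℕ, μ' ≤ μ → D μ = D μ' → D (μ + ψ) = D (μ' + ψ))

/-- The hull operator associated with a generator. -/
def hull {X : Type*} (D : (X → ℕ) → (X → ℕ)) (μ : X → ℕ) : Set X :=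
  {x | D (μ + delta x) = D μ}

open scoped Classical

/-- The indicator `H_x(μ) = 1{∂(μ + δ_x) ≠ ∂μ}`, as a real number. -/
noncomputable def Hf {X : Type*} (D : (X → ℕ) → (X → ℕ)) (x : X) (μ : X → ℕ) : ℝ :=
  if D (μ + delta x) = D μ then 0 else 1

lemma delta_apply_self {X : Type*} (x : X) : delta x x = 1 := by
  simp [delta]

lemma delta_apply_of_ne {X : Type*} {x z : X} (h : z ≠ x) : delta x z = 0 := by
  simp [delta, h]

namespace IsGenerator

variable {X : Type*} {D : (X → ℕ) → (X → ℕ)}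

theorem map_eq_of_le_of_le (hD : IsGenerator D) {μ ν : X → ℕ} (hlo : D μ ≤ ν) (hhi : ν ≤ μ) :
    D ν = D μ := by
  have hsplit : D μ + (ν - D μ) = ν := by
    funext z
    exact Nat.add_sub_cancel' (hlo z)
  rw [← hsplit]
  exact hD.2.2.1 μ (ν - D μ) (tsub_le_tsub_right hhi _)

theorem map_add_delta_eq_of_apply_eq_zero (hD : IsGenerator D) {μ : X → ℕ} {x : X}
    (hx : D (μ + delta x) x = 0) : D (μ + delta x) = D μ := by
  refine (hD.map_eq_of_le_of_le ?_ le_self_add).symm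
  intro z
  rcases eq_or_ne z x with rfl | hz
  · simp [hx]
  · simpa [delta_apply_of_ne hz] using hD.1 (μ + delta x) z

theorem map_add_delta_ne_of_apply_ne_zero (hD : IsGenerator D) {μ : X → ℕ} {x : X}
    (hx : D μ x ≠ 0) : D (μ + delta x) ≠ D μ := by
  intro h
  have := congrFun (h.symm.trans (hD.2.1 μ x hx)) x
  simp [delta_apply_self] at this

theorem map_add_add_of_map_add_eq (hD : IsGenerator D) {μ ν : X → ℕ} (ψ : X → ℕ)
    (h : D (μ + ν) = D μ) : D (μ + ν + ψ) = D (μ + ψ) :=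
  hD.2.2.2 (μ + ν) μ ψ le_self_add h

end IsGenerator

/-- For a generator `D`, all `x, y` and `μ`, the statements
(i) `∂(μ+δx+δy) = ∂(μ+δx) = ∂(μ+δy)`, (ii) `∂(μ+δx+δy) = ∂(μ+δx) = ∂μ`, and
(iii) `∂(μ+δx) = ∂(μ+δy) = ∂μ` are equivalent. -/
theorem two_point_lemma {X : Type*} (D : (X → ℕ) → (X → ℕ))
    (hD : IsGenerator D) (x y : X) (μ : X → ℕ) :
    ((D (μ + delta x + delta y) = D (μ + delta x) ∧
        D (μ + delta x) = D (μ + delta y)) ↔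
      (D (μ + delta x + delta y) = D (μ + delta x) ∧
        D (μ + delta x) = D μ)) ∧
    ((D (μ + delta x + delta y) = D (μ + delta x) ∧
        D (μ + delta x) = D μ) ↔
      (D (μ + delta x) = D μ ∧ D (μ + delta y) = D μ)) := by
  refine ⟨⟨fun ⟨hxy, hyx⟩ => ⟨hxy, ?_⟩, fun ⟨hxy, hx⟩ => ⟨hxy, ?_⟩⟩,
    ⟨fun ⟨hxy, hx⟩ => ⟨hx, ?_⟩, fun ⟨hx, hy⟩ => ⟨?_, hx⟩⟩⟩
  · -- otherwise `x` lies in the support of `∂(μ + δ_y) = ∂(μ + δ_x)`, and (H2) adds `δ_x` to it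
    by_contra hne
    have hx : D (μ + delta y) x ≠ 0 := hyx ▸ fun h0 => hne (hD.map_add_delta_eq_of_apply_eq_zero h0)
    refine hD.map_add_delta_ne_of_apply_ne_zero hx ?_
    rw [add_right_comm, hxy, hyx]
  · rw [← hxy, hD.map_add_add_of_map_add_eq _ hx]
  · rw [← hD.map_add_add_of_map_add_eq _ hx, hxy, hx]
  · rw [hD.map_add_add_of_map_add_eq _ hx, hy, hx]
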